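/- arXiv:1901.08191 — 9 statements merged into one kernel-verified Lean document; each statement's English description precedes it below -/
import Mathlib

section
/- Let ξ, μ, β be real numbers with ξ ≥ 2/3, μ ≥ 1 and β > 2/3, satisfying the key inequality: for every positive integer m with (m − 1 − 1/μ − 1/β)·ξ > 1 one has m·ξ ≥ ⌈(m − 1 − 1/μ − 1/β)·ξ⌉ + 2. Then ξ ≥ 4/5 and (6 − 1 − 1/μ − 1/β)·ξ > 2. -/
/-!
Since `1/μ + 1/β < 5/2`, the coefficient at `m = 5` exceeds `3/2`, so with `ξ ≥ 2/3` the key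
inequality applies at `m = 5`; its ceiling is then at least `2`, forcing `5ξ ≥ 4`. With `ξ ≥ 4/5`
the coefficient at `m = 6`, which exceeds `5/2`, gives `α(6) > 2`.
-/

lemma two_le_ceil_of_one_lt {α : Type*} [Ring α] [LinearOrder α] [IsStrictOrderedRing α]
    [FloorRing α] {x : α} (hx : 1 < x) : (2 : α) ≤ ⌈x⌉ := by
  have h : (1 : ℤ) < ⌈x⌉ := Int.lt_ceil.mpr (by exact_mod_cast hx)
  exact_mod_cast Int.add_one_le_of_lt h

lemma one_div_add_one_div_lt_five_halves {μ β : ℝ} (hμ : 1 ≤ μ) (hβ : 2 / 3 < β) :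
    1 / μ + 1 / β < 5 / 2 := by
  have hμ' : 1 / μ ≤ 1 := by rw [div_le_one (by linarith)]; exact hμ
  have hβ' : 1 / β < 3 / 2 := by rw [div_lt_iff₀ (by linarith)]; linarith
  linarith

/-- Numerical core of Lemma 4.6 (lem:beta2): under the key inequality, from
`ξ ≥ 2/3`, `μ ≥ 1` and `β > 2/3` one deduces `ξ ≥ 4/5` and `α(6) > 2`. -/
theorem stmt1 (ξ μ β : ℝ) (hξ : ξ ≥ 2 / 3) (hμ : μ ≥ 1) (hβ : β > 2 / 3)
    (key : ∀ m : ℕ, 0 < m → ((m : ℝ) - 1 - 1 / μ - 1 / β) * ξ > 1 →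
      (m : ℝ) * ξ ≥ (⌈((m : ℝ) - 1 - 1 / μ - 1 / β) * ξ⌉ : ℝ) + 2) :
    ξ ≥ 4 / 5 ∧ (6 - 1 - 1 / μ - 1 / β) * ξ > 2 := by
  have hinv := one_div_add_one_div_lt_five_halves hμ hβ
  have h5 : (((5 : ℕ) : ℝ) - 1 - 1 / μ - 1 / β) * ξ > 1 := by
    push_cast
    nlinarith
  have hξ45 : ξ ≥ 4 / 5 := by
    have hkey5 := key 5 (by norm_num) h5
    have hceil := two_le_ceil_of_one_lt h5
    push_cast at hkey5 hceil
    linarith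
  exact ⟨hξ45, by nlinarith⟩
end

section
/- Let ξ, μ, β be real numbers with ξ ≥ 2/3, μ > 4/3 and β ≥ 4/7, satisfying the key inequality: for every positive integer m with (m − 1 − 1/μ − 1/β)·ξ > 1 one has m·ξ ≥ ⌈(m − 1 − 1/μ − 1/β)·ξ⌉ + 2. Then ξ ≥ 4/5 and (6 − 1 − 1/μ − 1/β)·ξ > 2. -/
/-! Since `1/μ + 1/β < 3/4 + 7/4 = 5/2`, the quantity `α(5) = (4 - 1/μ - 1/β) ξ` exceeds
`3/2 · 2/3 = 1`, so the key inequality at `m = 5` applies; the ceiling of a number above `1`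
is at least `2`, hence `5 ξ ≥ 4`. With `ξ ≥ 4/5`, `α(6) > 5/2 · 4/5 = 2`. -/

lemma inv_add_inv_lt_five_halves {μ β : ℝ} (hμ : 4 / 3 < μ) (hβ : 4 / 7 ≤ β) :
    1 / μ + 1 / β < 5 / 2 := by
  have hμ' : 1 / μ < 3 / 4 := by
    rw [div_lt_div_iff₀ (by linarith) (by norm_num)]; linarith
  have hβ' : 1 / β ≤ 7 / 4 := by
    rw [div_le_div_iff₀ (by linarith) (by norm_num)]; linarith
  linarith

lemma two_le_ceil_of_one_lt_s2 {x : ℝ} (hx : 1 < x) : (2 : ℝ) ≤ ⌈x⌉ := by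
  have : (1 : ℤ) < ⌈x⌉ := Int.lt_ceil.mpr (by exact_mod_cast hx)
  exact_mod_cast this

/-- Numerical core of Lemma 4.7 (lem:zeta): under the key inequality, from
`ξ ≥ 2/3`, `μ > 4/3` and `β ≥ 4/7` one deduces `ξ ≥ 4/5` and `α(6) > 2`. -/
theorem stmt2 (ξ μ β : ℝ) (hξ : ξ ≥ 2 / 3) (hμ : μ > 4 / 3) (hβ : β ≥ 4 / 7)
    (key : ∀ m : ℕ, 0 < m → ((m : ℝ) - 1 - 1 / μ - 1 / β) * ξ > 1 →
      (m : ℝ) * ξ ≥ (⌈((m : ℝ) - 1 - 1 / μ - 1 / β) * ξ⌉ : ℝ) + 2) :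
    ξ ≥ 4 / 5 ∧ (6 - 1 - 1 / μ - 1 / β) * ξ > 2 := by
  have hs := inv_add_inv_lt_five_halves hμ hβ
  have hα5 : ((5 : ℕ) - 1 - 1 / μ - 1 / β) * ξ > 1 := by
    have := mul_lt_mul (show (3 : ℝ) / 2 < 5 - 1 - 1 / μ - 1 / β by linarith) hξ
      (by norm_num) (by linarith)
    push_cast
    linarith
  have h5ξ := key 5 (by norm_num) hα5
  have hceil := two_le_ceil_of_one_lt_s2 hα5
  have hξ45 : ξ ≥ 4 / 5 := by push_cast at h5ξ hceil; linarith
  refine ⟨hξ45, ?_⟩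
  have := mul_lt_mul (show (5 : ℝ) / 2 < 6 - 1 - 1 / μ - 1 / β by linarith) hξ45
    (by norm_num) (by linarith)
  linarith
end

section
/- Let ξ, μ, β be real numbers with ξ > 2/3, μ ≥ 1 and β ≥ 1/2, satisfying the key inequality: for every positive integer m with (m − 1 − 1/μ − 1/β)·ξ > 1 one has m·ξ ≥ ⌈(m − 1 − 1/μ − 1/β)·ξ⌉ + 2. Then ξ ≥ 5/7. -/
lemma three_le_six_sub_inv_sub_inv {μ β : ℝ} (hμ : 1 ≤ μ) (hβ : 1 / 2 ≤ β) :
    3 ≤ 6 - 1 / μ - 1 / β := by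
  have hμ' : 1 / μ ≤ 1 := (div_le_one (by linarith)).2 hμ
  have hβ' : 1 / β ≤ 2 := by
    rw [div_le_iff₀ (by linarith)]
    linarith
  linarith

/-- Opening numerical step of Proposition 4.14: under the key inequality, from
`ξ > 2/3`, `μ ≥ 1` and `β ≥ 1/2` one deduces `ξ ≥ 5/7`. -/
theorem stmt3 (ξ μ β : ℝ) (hξ : ξ > 2 / 3) (hμ : μ ≥ 1) (hβ : β ≥ 1 / 2)
    (key : ∀ m : ℕ, 0 < m → ((m : ℝ) - 1 - 1 / μ - 1 / β) * ξ > 1 →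
      (m : ℝ) * ξ ≥ (⌈((m : ℝ) - 1 - 1 / μ - 1 / β) * ξ⌉ : ℝ) + 2) :
    ξ ≥ 5 / 7 := by
  set α := ((7 : ℕ) - 1 - 1 / μ - 1 / β) * ξ with hα_def
  have hα : 2 < α :=
    calc (2 : ℝ) < 3 * ξ := by linarith
      _ ≤ α := by
        rw [hα_def]
        gcongr
        linarith [three_le_six_sub_inv_sub_inv hμ hβ]
  have hceil : (3 : ℝ) ≤ ⌈α⌉ := by
    exact_mod_cast (Int.lt_ceil.2 (by exact_mod_cast hα) : (2 : ℤ) < ⌈α⌉)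
  have h7 : ((7 : ℕ) : ℝ) * ξ ≥ ⌈α⌉ + 2 := key 7 (by norm_num) (by linarith)
  push_cast at h7
  linarith
end

section
/- Let ξ, μ, β be real numbers with ξ ≥ 2/3, μ ≥ 1 and β ≥ 4/7, satisfying the key inequality: for every positive integer m with (m − 1 − 1/μ − 1/β)·ξ > 1 one has m·ξ ≥ ⌈(m − 1 − 1/μ − 1/β)·ξ⌉ + 2. Then ξ ≥ 3/4. -/
/-! Since `1/μ + 1/β ≤ 11/4`, the key inequality at `m = 7` applies with `(7 - 1 - 1/μ - 1/β)ξ ≥ 13/4 · 2/3 > 2`,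
so the ceiling is at least `3` and `7ξ ≥ 5`. With `ξ ≥ 5/7`, the key inequality at `m = 8` applies with
`(8 - 1 - 1/μ - 1/β)ξ ≥ 17/4 · 5/7 > 3`, so the ceiling is at least `4` and `8ξ ≥ 6`. -/

lemma one_div_add_one_div_le_eleven_fourths {μ β : ℝ} (hμ : 1 ≤ μ) (hβ : 4 / 7 ≤ β) :
    1 / μ + 1 / β ≤ 11 / 4 := by
  have hμ' : 1 / μ ≤ 1 := by rw [div_le_one (by linarith)]; exact hμ
  have hβ' : 1 / β ≤ 7 / 4 := by rw [div_le_iff₀ (by linarith)]; linarith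
  linarith

lemma int_add_three_le_of_lt_of_ceil_add_two_le {c y : ℝ} {k : ℤ} (hk : 1 ≤ k) (hc : (k : ℝ) < c)
    (key : 1 < c → y ≥ (⌈c⌉ : ℝ) + 2) : (k : ℝ) + 3 ≤ y := by
  have hceil : k + 1 ≤ ⌈c⌉ := Int.lt_ceil.mpr hc
  have hceil' : (k : ℝ) + 1 ≤ ⌈c⌉ := by exact_mod_cast hceil
  have hk' : (1 : ℝ) ≤ k := by exact_mod_cast hk
  linarith [key (by linarith)]

/-- Two-step bootstrap used in Propositions 4.11, 4.13 and 4.14: under the key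
inequality, from `ξ ≥ 2/3`, `μ ≥ 1` and `β ≥ 4/7` one deduces `ξ ≥ 3/4`. -/
theorem stmt4 (ξ μ β : ℝ) (hξ : ξ ≥ 2 / 3) (hμ : μ ≥ 1) (hβ : β ≥ 4 / 7)
    (key : ∀ m : ℕ, 0 < m → ((m : ℝ) - 1 - 1 / μ - 1 / β) * ξ > 1 →
      (m : ℝ) * ξ ≥ (⌈((m : ℝ) - 1 - 1 / μ - 1 / β) * ξ⌉ : ℝ) + 2) :
    ξ ≥ 3 / 4 := by
  have hs := one_div_add_one_div_le_eleven_fourths hμ hβ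
  have h7 : ((2 : ℤ) : ℝ) + 3 ≤ ((7 : ℕ) : ℝ) * ξ :=
    int_add_three_le_of_lt_of_ceil_add_two_le (by norm_num) (by push_cast; nlinarith)
      (key 7 (by norm_num))
  push_cast at h7
  have h8 : ((3 : ℤ) : ℝ) + 3 ≤ ((8 : ℕ) : ℝ) * ξ :=
    int_add_three_le_of_lt_of_ceil_add_two_le (by norm_num) (by push_cast; nlinarith)
      (key 8 (by norm_num))
  push_cast at h8
  linarith
end

section
/- Let ξ, μ, β be real numbers with ξ ≥ 2/3, μ ≥ 7/6 and β ≥ 6/11, satisfying the key inequality: for every positive integer m with (m − 1 − 1/μ − 1/β)·ξ > 1 one has m·ξ ≥ ⌈(m − 1 − 1/μ − 1/β)·ξ⌉ + 2. Then ξ ≥ 3/4 and μ·β·ξ ≥ 21/44 > 0.4772. -/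
/-!
The key inequality is used twice, each time bootstrapping a better lower bound for `ξ`.
Since `1/μ + 1/β ≤ 6/7 + 11/6`, the bound `ξ ≥ 2/3` makes `(7 - 1 - 1/μ - 1/β) ξ` exceed `2`,
so its ceiling is at least `3` and `7ξ ≥ 5`; then `ξ ≥ 5/7` makes `(8 - 1 - 1/μ - 1/β) ξ`
exceed `3`, whence `8ξ ≥ 6`. The volume bound is `μβξ ≥ (7/6)(6/11)(3/4) = 21/44`.
-/

def KeyInequality (ξ μ β : ℝ) : Prop :=
  ∀ m : ℕ, 0 < m → ((m : ℝ) - 1 - 1 / μ - 1 / β) * ξ > 1 →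
    (m : ℝ) * ξ ≥ (⌈((m : ℝ) - 1 - 1 / μ - 1 / β) * ξ⌉ : ℝ) + 2

namespace KeyInequality

variable {ξ μ β : ℝ}

theorem add_three_le_mul (h : KeyInequality ξ μ β) {m : ℕ} (hm : 0 < m) {k : ℤ} (hk : 1 ≤ k)
    (hx : (k : ℝ) < ((m : ℝ) - 1 - 1 / μ - 1 / β) * ξ) : (k : ℝ) + 3 ≤ m * ξ := by
  have hceil : k + 1 ≤ ⌈((m : ℝ) - 1 - 1 / μ - 1 / β) * ξ⌉ := Int.lt_ceil.mpr hx
  have hceil' : (k : ℝ) + 1 ≤ ⌈((m : ℝ) - 1 - 1 / μ - 1 / β) * ξ⌉ := by exact_mod_cast hceil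
  have hk' : (1 : ℝ) ≤ k := by exact_mod_cast hk
  linarith [h m hm (by linarith)]

theorem add_three_le_mul_of_le (h : KeyInequality ξ μ β) {m : ℕ} (hm : 0 < m) {k : ℤ}
    (hk : 1 ≤ k) {ξ₀ s : ℝ} (hξ : ξ₀ ≤ ξ) (hs : 1 / μ + 1 / β ≤ s) (hms : 0 ≤ (m : ℝ) - 1 - s)
    (hk₀ : (k : ℝ) < ((m : ℝ) - 1 - s) * ξ₀) : (k : ℝ) + 3 ≤ m * ξ := by
  refine h.add_three_le_mul hm hk ?_
  have hk' : (1 : ℝ) ≤ k := by exact_mod_cast hk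
  have hξ₀ : 0 < ξ₀ := pos_of_mul_pos_right (by linarith) hms
  calc (k : ℝ) < ((m : ℝ) - 1 - s) * ξ₀ := hk₀
    _ ≤ ((m : ℝ) - 1 - s) * ξ := mul_le_mul_of_nonneg_left hξ hms
    _ ≤ ((m : ℝ) - 1 - 1 / μ - 1 / β) * ξ := mul_le_mul_of_nonneg_right (by linarith) (by linarith)

end KeyInequality

theorem one_div_add_one_div_le_of_le {μ β μ₀ β₀ : ℝ} (hμ₀ : 0 < μ₀) (hβ₀ : 0 < β₀) (hμ : μ₀ ≤ μ)
    (hβ : β₀ ≤ β) : 1 / μ + 1 / β ≤ 1 / μ₀ + 1 / β₀ :=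
  add_le_add (one_div_le_one_div_of_le hμ₀ hμ) (one_div_le_one_div_of_le hβ₀ hβ)

/-- Numerical content of case (4.2) in the proof of Proposition 4.14: under the
key inequality, from `ξ ≥ 2/3`, `μ ≥ 7/6` and `β ≥ 6/11` one deduces `ξ ≥ 3/4`
and `μ * β * ξ ≥ 21/44 > 0.4772`. -/
theorem stmt5 (ξ μ β : ℝ) (hξ : ξ ≥ 2 / 3) (hμ : μ ≥ 7 / 6) (hβ : β ≥ 6 / 11)
    (key : ∀ m : ℕ, 0 < m → ((m : ℝ) - 1 - 1 / μ - 1 / β) * ξ > 1 →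
      (m : ℝ) * ξ ≥ (⌈((m : ℝ) - 1 - 1 / μ - 1 / β) * ξ⌉ : ℝ) + 2) :
    ξ ≥ 3 / 4 ∧ μ * β * ξ ≥ 21 / 44 ∧ (21 : ℝ) / 44 > 0.4772 := by
  have key : KeyInequality ξ μ β := key
  have hs : 1 / μ + 1 / β ≤ 1 / (7 / 6) + 1 / (6 / 11) :=
    one_div_add_one_div_le_of_le (by norm_num) (by norm_num) hμ hβ
  have h7 : ((2 : ℤ) : ℝ) + 3 ≤ ((7 : ℕ) : ℝ) * ξ :=
    key.add_three_le_mul_of_le (by norm_num) (by norm_num) hξ hs (by norm_num) (by norm_num)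
  have h8 : ((3 : ℤ) : ℝ) + 3 ≤ ((8 : ℕ) : ℝ) * ξ :=
    key.add_three_le_mul_of_le (ξ₀ := 5 / 7) (by norm_num) (by norm_num)
      (by push_cast at h7; linarith) hs (by norm_num) (by norm_num)
  have hξ' : ξ ≥ 3 / 4 := by push_cast at h8; linarith
  have hμβ : 7 / 6 * (6 / 11) ≤ μ * β := mul_le_mul hμ hβ (by norm_num) (by linarith)
  refine ⟨hξ', ?_, by norm_num⟩
  calc (21 : ℝ) / 44 = 7 / 6 * (6 / 11) * (3 / 4) := by norm_num
    _ ≤ μ * β * ξ := mul_le_mul hμβ hξ' (by norm_num) (by linarith)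
end

section
/- Let ξ, μ, β be real numbers with ξ ≥ 2/3, μ ≥ 6/5 and β ≥ 2/3, satisfying the key inequality: for every positive integer m with (m − 1 − 1/μ − 1/β)·ξ > 1 one has m·ξ ≥ ⌈(m − 1 − 1/μ − 1/β)·ξ⌉ + 2. Then ξ ≥ 4/5 and (6 − 1 − 1/μ − 1/β)·ξ > 2. -/
/-!
With `s = 1/μ + 1/β ≤ 5/6 + 3/2 = 7/3`, write `α(m) = (m - 1 - s) ξ`. The key
inequality upgrades `α(m) > n` (for an integer `n ≥ 1`) to `m ξ ≥ ⌈α(m)⌉ + 2 ≥ n + 3`.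
Starting from `ξ ≥ 2/3`: `α(7) > 2` gives `ξ ≥ 5/7`, then `α(5) > 1` gives `ξ ≥ 4/5`,
and then `α(6) > 2`.
-/

lemma one_div_add_one_div_le_seven_thirds {μ β : ℝ} (hμ : μ ≥ 6 / 5) (hβ : β ≥ 2 / 3) :
    1 / μ + 1 / β ≤ 7 / 3 := by
  have hμ' : 1 / μ ≤ 5 / 6 := by
    rw [div_le_div_iff₀ (by linarith) (by norm_num)]; linarith
  have hβ' : 1 / β ≤ 3 / 2 := by
    rw [div_le_div_iff₀ (by linarith) (by norm_num)]; linarith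
  linarith

lemma int_add_three_le_of_ceil_add_two_le {x y : ℝ} {n : ℤ} (hn : 1 ≤ n)
    (key : x > 1 → y ≥ ⌈x⌉ + 2) (h : (n : ℝ) < x) : (n : ℝ) + 3 ≤ y := by
  have hx : x > 1 := lt_of_le_of_lt (by exact_mod_cast hn) h
  have hceil : (n : ℝ) + 1 ≤ ⌈x⌉ := by exact_mod_cast Int.lt_ceil.mpr h
  linarith [key hx]

/-- Numerical argument in case (iii) of the second part of the proof of
Proposition 4.12: under the key inequality, from `ξ ≥ 2/3`, `μ ≥ 6/5` and
`β ≥ 2/3` one deduces `ξ ≥ 4/5` and `α(6) > 2`. -/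
theorem stmt6 (ξ μ β : ℝ) (hξ : ξ ≥ 2 / 3) (hμ : μ ≥ 6 / 5) (hβ : β ≥ 2 / 3)
    (key : ∀ m : ℕ, 0 < m → ((m : ℝ) - 1 - 1 / μ - 1 / β) * ξ > 1 →
      (m : ℝ) * ξ ≥ (⌈((m : ℝ) - 1 - 1 / μ - 1 / β) * ξ⌉ : ℝ) + 2) :
    ξ ≥ 4 / 5 ∧ (6 - 1 - 1 / μ - 1 / β) * ξ > 2 := by
  have hs := one_div_add_one_div_le_seven_thirds hμ hβ
  have h7 : ((2 : ℤ) : ℝ) + 3 ≤ ((7 : ℕ) : ℝ) * ξ :=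
    int_add_three_le_of_ceil_add_two_le (by norm_num) (key 7 (by norm_num))
      (by push_cast; nlinarith)
  have hξ7 : ξ ≥ 5 / 7 := by push_cast at h7; linarith
  have h5 : ((1 : ℤ) : ℝ) + 3 ≤ ((5 : ℕ) : ℝ) * ξ :=
    int_add_three_le_of_ceil_add_two_le le_rfl (key 5 (by norm_num)) (by push_cast; nlinarith)
  have hξ5 : ξ ≥ 4 / 5 := by push_cast at h5; linarith
  exact ⟨hξ5, by nlinarith⟩
end

section
/- Let ξ be a real number with ξ ≥ 2/3 such that for every integer n ≥ 6 one has (n + 1)·ξ ≥ ⌈(n − 5)·ξ⌉ + 4, where ⌈·⌉ denotes the ceiling function. Then ξ ≥ 4/5; moreover, if ξ > 4/5, then ξ ≥ 9/11. -/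
/-!
Once `(n - 5) ξ > n - 6`, the ceiling `⌈(n - 5) ξ⌉` is at least `n - 5`, and the key inequality
yields `(n + 1) ξ ≥ n - 1`. Since `(n - 1)/(n + 1) > (n - 5)/(n - 4)` for `n < 9`, each step
feeds the next: starting from `ξ > 0`, the bounds `5/7, 3/4, 7/9, 4/5` follow from `n = 6, …, 9`.
The bound `4/5` is exactly the threshold for `n = 10`, so the final step to `9/11` needs `ξ > 4/5`.
-/

lemma Int.cast_add_le_of_ceil_add_le {x y c : ℝ} {k : ℤ} (h : (⌈x⌉ : ℝ) + c ≤ y)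
    (hk : (k : ℝ) - 1 < x) : (k : ℝ) + c ≤ y := by
  have hk' : k ≤ ⌈x⌉ := Int.le_ceil_iff.mpr (by exact_mod_cast hk)
  have : (k : ℝ) ≤ ⌈x⌉ := by exact_mod_cast hk'
  linarith

lemma sub_one_le_of_ceil_bound {ξ : ℝ} {n : ℕ}
    (hkey : ((n : ℝ) + 1) * ξ ≥ (⌈((n : ℝ) - 5) * ξ⌉ : ℝ) + 4)
    (h : (n : ℝ) - 6 < ((n : ℝ) - 5) * ξ) : (n : ℝ) - 1 ≤ ((n : ℝ) + 1) * ξ := by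
  have := Int.cast_add_le_of_ceil_add_le (k := (n : ℤ) - 5) hkey (by push_cast; linarith)
  push_cast at this
  linarith

/-- Numerical content of Case V of the proof of Proposition 4.14: if `ξ ≥ 2/3`
and `(n + 1) * ξ ≥ ⌈(n − 5) * ξ⌉ + 4` for every integer `n ≥ 6`, then
`ξ ≥ 4/5`, and if moreover `ξ > 4/5`, then `ξ ≥ 9/11`. -/
theorem stmt8 (ξ : ℝ) (hξ : ξ ≥ 2 / 3)
    (key : ∀ n : ℕ, 6 ≤ n →
      ((n : ℝ) + 1) * ξ ≥ (⌈((n : ℝ) - 5) * ξ⌉ : ℝ) + 4) :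
    ξ ≥ 4 / 5 ∧ (ξ > 4 / 5 → ξ ≥ 9 / 11) := by
  have step (n : ℕ) (hn : 6 ≤ n) := sub_one_le_of_ceil_bound (key n hn)
  have h6 := step 6 le_rfl (by norm_num; linarith)
  have h7 := step 7 (by norm_num) (by norm_num at h6 ⊢; linarith)
  have h8 := step 8 (by norm_num) (by norm_num at h7 ⊢; linarith)
  have h9 := step 9 (by norm_num) (by norm_num at h8 ⊢; linarith)
  norm_num at h9
  refine ⟨by linarith, fun hgt => ?_⟩
  have h10 := step 10 (by norm_num) (by norm_num; linarith)
  norm_num at h10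
  linarith
end

section
/- Let η be a real number with η ≥ 16/7 such that for every integer n ≥ 8 one has (n + 1)·η ≥ ⌈(n − 6)·η⌉ + 16, where ⌈·⌉ denotes the ceiling function. Then η ≥ 12/5. -/
/-!
Each use of the recurrence at some `n` rounds `(n - 6) * η` up to the next integer, which
improves the lower bound on `η`: from `η ≥ 16/7`, the cases `n = 8, 10, 9` give in turn
`⌈2η⌉ ≥ 5`, hence `η ≥ 7/3`; `⌈4η⌉ ≥ 10`, hence `η ≥ 26/11`; and `⌈3η⌉ ≥ 8`, hence `η ≥ 12/5`.
-/

theorem Int.cast_add_one_le_ceil_of_cast_lt {R : Type*} [Ring R] [LinearOrder R]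
    [IsStrictOrderedRing R] [FloorRing R] {a : R} {z : ℤ} (h : (z : R) < a) : (z : R) + 1 ≤ ⌈a⌉ := by
  exact_mod_cast Int.add_one_le_iff.2 (Int.lt_ceil.2 h)

/-- Numerical content of Case IVa of the proof of Proposition 4.14: if
`η ≥ 16/7` and `(n + 1) * η ≥ ⌈(n − 6) * η⌉ + 16` for every integer `n ≥ 8`,
then `η ≥ 12/5`. -/
theorem stmt9 (η : ℝ) (hη : η ≥ 16 / 7)
    (key : ∀ n : ℕ, 8 ≤ n →
      ((n : ℝ) + 1) * η ≥ (⌈((n : ℝ) - 6) * η⌉ : ℝ) + 16) :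
    η ≥ 12 / 5 := by
  have step : ∀ (n : ℕ) (k : ℤ), 8 ≤ n → (k : ℝ) < ((n : ℝ) - 6) * η →
      (k : ℝ) + 17 ≤ ((n : ℝ) + 1) * η := fun n k hn hk => by
    linarith [key n hn, Int.cast_add_one_le_ceil_of_cast_lt hk]
  have h8 : η ≥ 7 / 3 := by
    have := step 8 4 le_rfl (by norm_num; linarith)
    norm_num at this; linarith
  have h10 : η ≥ 26 / 11 := by
    have := step 10 9 (by norm_num) (by norm_num; linarith)
    norm_num at this; linarith
  have := step 9 7 (by norm_num) (by norm_num; linarith)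
  norm_num at this; linarith
end

section
/- Let ξ, μ, β be real numbers with ξ > 2/3, μ ≥ 7/6 and β ≥ 7/13, satisfying the key inequality: for every positive integer m with (m − 1 − 1/μ − 1/β)·ξ > 1 one has m·ξ ≥ ⌈(m − 1 − 1/μ − 1/β)·ξ⌉ + 2. Then ξ ≥ 5/7 and μ·β·ξ ≥ 35/78. -/
/-! Since `1/μ + 1/β ≤ 19/7` and `ξ > 2/3`, the key inequality applies at `m = 7`, where
`(6 - 1/μ - 1/β) ξ ≥ 23ξ/7 > 2`; its ceiling is then at least `3`, so `7ξ ≥ 5`. Multiplying the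
three lower bounds gives `μβξ ≥ (7/6)(7/13)(5/7) = 35/78`. -/

lemma add_three_le_of_lt_of_ceil_add_two_le {α : Type*} [Ring α] [LinearOrder α]
    [IsStrictOrderedRing α] [FloorRing α] {x y : α} {k : ℤ} (hk : k < x) (h : ⌈x⌉ + 2 ≤ y) :
    k + 3 ≤ y := by
  have hceil : ((k + 1 : ℤ) : α) ≤ ⌈x⌉ := by exact_mod_cast Int.lt_ceil.mpr hk
  calc (k : α) + 3 = ((k + 1 : ℤ) : α) + 2 := by push_cast; norm_num [add_assoc]
    _ ≤ ⌈x⌉ + 2 := by gcongr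
    _ ≤ y := h

/-- Numerical argument proving statement (2) of Proposition 4.14: under the key
inequality, from `ξ > 2/3`, `μ ≥ 7/6` and `β ≥ 7/13` one deduces `ξ ≥ 5/7` and
`μ * β * ξ ≥ 35/78`. -/
theorem stmt17 (ξ μ β : ℝ) (hξ : ξ > 2 / 3) (hμ : μ ≥ 7 / 6) (hβ : β ≥ 7 / 13)
    (key : ∀ m : ℕ, 0 < m → ((m : ℝ) - 1 - 1 / μ - 1 / β) * ξ > 1 →
      (m : ℝ) * ξ ≥ (⌈((m : ℝ) - 1 - 1 / μ - 1 / β) * ξ⌉ : ℝ) + 2) :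
    ξ ≥ 5 / 7 ∧ μ * β * ξ ≥ 35 / 78 := by
  have hμ' : 1 / μ ≤ 6 / 7 := by simpa using one_div_le_one_div_of_le (by norm_num) hμ
  have hβ' : 1 / β ≤ 13 / 7 := by simpa using one_div_le_one_div_of_le (by norm_num) hβ
  have hterm : ((2 : ℤ) : ℝ) < ((7 : ℕ) - 1 - 1 / μ - 1 / β) * ξ := by
    push_cast
    calc (2 : ℝ) < 23 / 7 * ξ := by linarith
      _ ≤ (7 - 1 - 1 / μ - 1 / β) * ξ := by gcongr; linarith
  have h7ξ := add_three_le_of_lt_of_ceil_add_two_le hterm (key 7 (by norm_num) (by linarith))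
  push_cast at h7ξ
  have hξ' : ξ ≥ 5 / 7 := by linarith
  refine ⟨hξ', ?_⟩
  calc μ * β * ξ ≥ 7 / 6 * (7 / 13) * (5 / 7) := by gcongr
    _ = 35 / 78 := by norm_num
end
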